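/- arXiv:2305.08927 — 2 statements merged into one kernel-verified Lean document; each statement's English description precedes it below -/
import Mathlib

section
/- Let $n\ge 2$ affine contractions $S_1,\dots,S_n$ map $(0,1)$ onto pairwise disjoint subintervals $I_1,\dots,I_n$ of $(0,1)$ with $\sum_j |I_j| < 1$, and let $\alpha\in(0,1)$ be the unique solution of $\sum_{j=1}^n |I_j|^\alpha = 1$. Given weights $\mathfrak r_j>0$, $\sum_j\mathfrak r_j = 1$, let $p>1$ be the unique solution of $\sum_{j=1}^n (\mathfrak r_j |I_j|^{2\ell-1})^{1/p} = 1$ for a fixed integer $\ell\ge 1$, and set $\gamma = (2\ell-1)/(p-1)$. Then $\gamma \le \alpha$, with equality if and only if $\mathfrak r_j = |I_j|^\alpha$ for all $j$. -/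
set_option autoImplicit false

/-!
With `x j = r j * L j ^ (2ℓ-1)` and `θ = α / (α + 2ℓ - 1)`, the claim `γ ≤ α` is equivalent to
`1 / p ≤ θ`. Since every `x j < 1`, the map `s ↦ ∑ x j ^ s` is strictly decreasing, and it takes
the value `1` at `s = 1 / p`. At `s = θ` each term factors as `r j ^ θ * (L j ^ α) ^ (1 - θ)`, so
by the weighted AM–GM inequality the sum is at most `θ ∑ r j + (1 - θ) ∑ L j ^ α = 1`, with
equality exactly when `r j = L j ^ α` for every `j`.
-/

section

open Finset Real

lemma strictAnti_sum_rpow_of_lt_one {ι : Type*} {s : Finset ι} (hs : s.Nonempty) {x : ι → ℝ}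
    (hx0 : ∀ i ∈ s, 0 < x i) (hx1 : ∀ i ∈ s, x i < 1) :
    StrictAnti fun t : ℝ => ∑ i ∈ s, x i ^ t :=
  fun _ _ hst => sum_lt_sum_of_nonempty hs fun i hi =>
    rpow_lt_rpow_of_exponent_gt (hx0 i hi) (hx1 i hi) hst

section WeightedMean

variable {ι : Type*} {s : Finset ι} {a b : ι → ℝ} {θ : ℝ}

lemma sum_rpow_mul_rpow_le_sum_weighted (ha : ∀ i ∈ s, 0 ≤ a i) (hb : ∀ i ∈ s, 0 ≤ b i)
    (hθ0 : 0 ≤ θ) (hθ1 : θ ≤ 1) :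
    ∑ i ∈ s, a i ^ θ * b i ^ (1 - θ) ≤ θ * ∑ i ∈ s, a i + (1 - θ) * ∑ i ∈ s, b i := by
  rw [mul_sum, mul_sum, ← sum_add_distrib]
  exact sum_le_sum fun i hi =>
    geom_mean_le_arith_mean2_weighted hθ0 (sub_nonneg.2 hθ1) (ha i hi) (hb i hi) (by ring)

lemma sum_rpow_mul_rpow_le_one (ha : ∀ i ∈ s, 0 ≤ a i) (hb : ∀ i ∈ s, 0 ≤ b i)
    (hθ0 : 0 ≤ θ) (hθ1 : θ ≤ 1) (hsa : ∑ i ∈ s, a i = 1) (hsb : ∑ i ∈ s, b i = 1) :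
    ∑ i ∈ s, a i ^ θ * b i ^ (1 - θ) ≤ 1 := by
  simpa [hsa, hsb] using sum_rpow_mul_rpow_le_sum_weighted ha hb hθ0 hθ1

lemma sum_rpow_mul_rpow_eq_one_iff (ha : ∀ i ∈ s, 0 ≤ a i) (hb : ∀ i ∈ s, 0 ≤ b i)
    (hθ0 : 0 < θ) (hθ1 : θ < 1) (hsa : ∑ i ∈ s, a i = 1) (hsb : ∑ i ∈ s, b i = 1) :
    ∑ i ∈ s, a i ^ θ * b i ^ (1 - θ) = 1 ↔ ∀ i ∈ s, a i = b i := by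
  have hterm : ∀ i ∈ s, a i ^ θ * b i ^ (1 - θ) ≤ θ * a i + (1 - θ) * b i := fun i hi =>
    geom_mean_le_arith_mean2_weighted hθ0.le (sub_nonneg.2 hθ1.le) (ha i hi) (hb i hi) (by ring)
  have hmean : ∑ i ∈ s, (θ * a i + (1 - θ) * b i) = 1 := by
    rw [sum_add_distrib, ← mul_sum, ← mul_sum, hsa, hsb]; ring
  have hiff := sum_eq_sum_iff_of_le hterm
  rw [hmean] at hiff
  exact hiff.trans <| forall₂_congr fun i hi =>
    geom_mean_eq_arith_mean2_weighted_iff_of_pos hθ0 (sub_pos.2 hθ1) (ha i hi) (hb i hi) (by ring)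

end WeightedMean

lemma mul_rpow_rpow_div_add {x y α M : ℝ} (hx : 0 ≤ x) (hy : 0 ≤ y) (hαM : 0 < α + M) :
    (x * y ^ M) ^ (α / (α + M)) = x ^ (α / (α + M)) * (y ^ α) ^ (1 - α / (α + M)) := by
  rw [mul_rpow hx (rpow_nonneg hy _), ← rpow_mul hy, ← rpow_mul hy]
  congr 2
  field_simp
  ring

section Exponents

variable {α M p : ℝ} (hα : 0 < α) (hM : 0 ≤ M) (hp : 1 < p)
include hα hM hp

lemma div_sub_one_le_iff_one_div_le : M / (p - 1) ≤ α ↔ 1 / p ≤ α / (α + M) := by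
  rw [div_le_iff₀ (by linarith), div_le_div_iff₀ (by linarith) (by linarith)]
  constructor <;> intro h <;> linarith

lemma div_sub_one_eq_iff_one_div_eq : M / (p - 1) = α ↔ 1 / p = α / (α + M) := by
  rw [div_eq_iff (by linarith), div_eq_div_iff (by linarith) (by linarith)]
  constructor <;> intro h <;> linarith

end Exponents

end

open Set

theorem spectral_dimension_le_hausdorff_dimension_general
    (n : ℕ) (ℓ : ℕ) (hℓ : 1 ≤ ℓ)
    (L : Fin n → ℝ) (hL : ∀ j, 0 < L j)
    (hLsum : (∑ j, L j) < 1)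
    (α : ℝ) (hα : α ∈ Ioo (0:ℝ) 1) (hαeq : (∑ j, L j ^ α) = 1)
    (r : Fin n → ℝ) (hr : ∀ j, 0 < r j) (hrsum : (∑ j, r j) = 1)
    (p : ℝ) (hp : 1 < p)
    (hpeq : (∑ j, (r j * L j ^ (2 * ℓ - 1 : ℕ)) ^ (1 / p)) = 1)
    (γ : ℝ) (hγ : γ = ((2 * ℓ - 1 : ℕ) : ℝ) / (p - 1)) :
    γ ≤ α ∧ (γ = α ↔ ∀ j, r j = L j ^ α) := by
  obtain ⟨hα0, -⟩ := hα
  set m : ℕ := 2 * ℓ - 1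
  have hm : (0 : ℝ) < m := Nat.cast_pos.2 (by omega)
  set θ := α / (α + m)
  have hθ0 : 0 < θ := div_pos hα0 (by linarith)
  have hθ1 : θ < 1 := (div_lt_one (by linarith)).2 (by linarith)
  have hx1 : ∀ j, r j * L j ^ m < 1 := fun j => by
    have hrj : r j ≤ 1 := hrsum ▸ Finset.single_le_sum (fun i _ => (hr i).le) (Finset.mem_univ j)
    have hLj : L j < 1 :=
      (Finset.single_le_sum (fun i _ => (hL i).le) (Finset.mem_univ j)).trans_lt hLsum
    exact mul_lt_one_of_nonneg_of_lt_one_right hrj (pow_pos (hL j) m).le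
      (pow_lt_one₀ (hL j).le hLj (by omega))
  have hanti : StrictAnti fun s : ℝ => ∑ j, (r j * L j ^ m) ^ s :=
    strictAnti_sum_rpow_of_lt_one (Finset.nonempty_of_sum_ne_zero (hrsum ▸ one_ne_zero))
      (fun j _ => mul_pos (hr j) (pow_pos (hL j) m)) fun j _ => hx1 j
  have hfactor : ∑ j, (r j * L j ^ m) ^ θ = ∑ j, r j ^ θ * (L j ^ α) ^ (1 - θ) :=
    Finset.sum_congr rfl fun j _ => by
      rw [← Real.rpow_natCast]
      exact mul_rpow_rpow_div_add (hr j).le (hL j).le (by linarith)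
  have hle := sum_rpow_mul_rpow_le_one (fun j _ => (hr j).le)
    (fun j _ => (Real.rpow_pos_of_pos (hL j) α).le) hθ0.le hθ1.le hrsum hαeq
  have heq := sum_rpow_mul_rpow_eq_one_iff (fun j _ => (hr j).le)
    (fun j _ => (Real.rpow_pos_of_pos (hL j) α).le) hθ0 hθ1 hrsum hαeq
  rw [hγ, div_sub_one_le_iff_one_div_le hα0 hm.le hp, div_sub_one_eq_iff_one_div_eq hα0 hm.le hp,
    ← hanti.le_iff_ge, ← hanti.injective.eq_iff, hpeq, hfactor, eq_comm, heq]
  simpa using hle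

/-- **Spectral dimension vs. Hausdorff dimension of a self-similar measure**
(Nazarov). Let `I j = (c j, c j + L j)`, `j = 1, …, n`, be pairwise disjoint
subintervals of `(0,1)` with `∑ L j < 1`, let `α ∈ (0,1)` solve `∑ L j ^ α = 1`,
let weights `𝔯 j > 0` with `∑ 𝔯 j = 1`, let `p > 1` solve
`∑ (𝔯 j * L j ^ (2ℓ-1)) ^ (1/p) = 1`, and set `γ = (2ℓ-1)/(p-1)`. Then `γ ≤ α`,
with equality if and only if `𝔯 j = L j ^ α` for all `j`. -/
theorem spectral_dimension_le_hausdorff_dimension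
    (n : ℕ) (hn : 2 ≤ n) (ℓ : ℕ) (hℓ : 1 ≤ ℓ)
    (c L : Fin n → ℝ) (hL : ∀ j, 0 < L j)
    (hsub : ∀ j, Ioo (c j) (c j + L j) ⊆ Ioo (0:ℝ) 1)
    (hdisj : Pairwise fun i j => Disjoint (Ioo (c i) (c i + L i)) (Ioo (c j) (c j + L j)))
    (hLsum : (∑ j, L j) < 1)
    (α : ℝ) (hα : α ∈ Ioo (0:ℝ) 1) (hαeq : (∑ j, L j ^ α) = 1)
    (r : Fin n → ℝ) (hr : ∀ j, 0 < r j) (hrsum : (∑ j, r j) = 1)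
    (p : ℝ) (hp : 1 < p)
    (hpeq : (∑ j, (r j * L j ^ (2 * ℓ - 1 : ℕ)) ^ (1 / p)) = 1)
    (γ : ℝ) (hγ : γ = ((2 * ℓ - 1 : ℕ) : ℝ) / (p - 1)) :
    γ ≤ α ∧ (γ = α ↔ ∀ j, r j = L j ^ α) :=
  spectral_dimension_le_hausdorff_dimension_general n ℓ hℓ L hL hLsum α hα hαeq r hr hrsum p hp hpeq
    γ hγ
end

section
/- Fix an integer $\ell\ge 1$ and disjoint intervals $I_1,\dots,I_n\subset(0,1)$, weights $\mathfrak r_j>0$ with $\sum_j\mathfrak r_j=1$, and set $\mathfrak c_j = \mathfrak r_j|I_j|^{2\ell-1}$. Then the equation $\sum_{j=1}^n \mathfrak c_j^{1/p} = 1$ has a unique solution $p$, and $p\ge 2\ell$, with $p=2\ell$ if and only if $\mathfrak r_j = |I_j|$ for all $j$ and $\sum_j |I_j| = 1$. -/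
set_option autoImplicit false

open Set

/-- Strict two-point AM-GM: if `r ≠ l` then `r^a * l^(1-a) < a*r + (1-a)*l`. -/
private lemma amgm_strict {a r l : ℝ} (ha : 0 < a) (ha1 : a < 1) (hr : 0 < r) (hl : 0 < l)
    (hne : r ≠ l) : r ^ a * l ^ (1 - a) < a * r + (1 - a) * l := by
  have hx : 0 < r / l := div_pos hr hl
  have hx1 : r / l ≠ 1 := by
    intro h
    rw [div_eq_iff (ne_of_gt hl), one_mul] at h
    exact hne h
  have key : (r / l) ^ a < a * (r / l) + (1 - a) := by
    have h : a • Real.log (r / l) + (1 - a) • Real.log 1 <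
        Real.log (a • (r / l) + (1 - a) • (1:ℝ)) :=
      strictConcaveOn_log_Ioi.2 (Set.mem_Ioi.2 hx) (Set.mem_Ioi.2 one_pos) hx1 ha
        (by linarith) (by ring)
    simp only [smul_eq_mul, Real.log_one, mul_zero, add_zero, mul_one] at h
    have hpos : 0 < a * (r / l) + (1 - a) := by nlinarith
    have h2 : (r / l) ^ a = Real.exp (a * Real.log (r / l)) := by
      rw [Real.rpow_def_of_pos hx, mul_comm]
    rw [h2, ← Real.exp_log hpos]
    exact Real.exp_lt_exp.2 h
  have hlapos : (0:ℝ) < l ^ a := Real.rpow_pos_of_pos hl a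
  calc r ^ a * l ^ (1 - a) = (r / l) ^ a * l := by
        rw [Real.div_rpow hr.le hl.le, Real.rpow_sub hl, Real.rpow_one]
        field_simp
      _ < (a * (r / l) + (1 - a)) * l := mul_lt_mul_of_pos_right key hl
      _ = a * r + (1 - a) * l := by field_simp

/-- **The spectral exponent of a self-similar measure.** With disjoint intervals
`I j = (c j, c j + L j) ⊂ (0,1)`, weights `𝔯 j > 0`, `∑ 𝔯 j = 1`, and
`𝔠 j = 𝔯 j * L j ^ (2ℓ-1)`, the equation `∑ 𝔠 j ^ (1/p) = 1` has a unique
(positive) solution `p`; moreover `p ≥ 2ℓ`, and `p = 2ℓ` if and only if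
`𝔯 j = L j` for all `j` and `∑ L j = 1` (the Lebesgue case). -/
theorem spectral_exponent_exists_unique_and_ge
    (n : ℕ) (hn : 2 ≤ n) (ℓ : ℕ) (hℓ : 1 ≤ ℓ)
    (c L : Fin n → ℝ) (hL : ∀ j, 0 < L j)
    (hsub : ∀ j, Ioo (c j) (c j + L j) ⊆ Ioo (0:ℝ) 1)
    (hdisj : Pairwise fun i j => Disjoint (Ioo (c i) (c i + L i)) (Ioo (c j) (c j + L j)))
    (r : Fin n → ℝ) (hr : ∀ j, 0 < r j) (hrsum : (∑ j, r j) = 1) :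
    (∃! p : ℝ, 0 < p ∧ (∑ j, (r j * L j ^ (2 * ℓ - 1 : ℕ)) ^ (1 / p)) = 1) ∧
    (∀ p : ℝ, 0 < p → (∑ j, (r j * L j ^ (2 * ℓ - 1 : ℕ)) ^ (1 / p)) = 1 →
      ((2 * ℓ : ℝ) ≤ p ∧
        (p = (2 * ℓ : ℝ) ↔ (∀ j, r j = L j) ∧ (∑ j, L j) = 1))) := by
  have hnpos : 0 < n := by omega
  haveI : Nontrivial (Fin n) := Fin.nontrivial_iff_two_le.mpr hn
  -- basic facts
  have hL1 : ∀ j, L j ≤ 1 := by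
    intro j
    have h := (Set.Ioo_subset_Ioo_iff (by linarith [hL j] : c j < c j + L j)).1 (hsub j)
    linarith [h.1, h.2]
  have hrlt1 : ∀ j, r j < 1 := by
    intro j
    obtain ⟨i, hi⟩ := exists_ne j
    have h1 : r j < ∑ i, r i :=
      Finset.single_lt_sum hi (Finset.mem_univ j) (Finset.mem_univ i) (hr i)
        (fun k _ _ => (hr k).le)
    rw [hrsum] at h1
    exact h1
  have h𝔠pos : ∀ j, 0 < r j * L j ^ (2 * ℓ - 1 : ℕ) := fun j =>
    mul_pos (hr j) (pow_pos (hL j) _)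
  have h𝔠lt1 : ∀ j, r j * L j ^ (2 * ℓ - 1 : ℕ) < 1 := by
    intro j
    have h1 : L j ^ (2 * ℓ - 1 : ℕ) ≤ 1 := pow_le_one₀ (hL j).le (hL1 j)
    calc r j * L j ^ (2 * ℓ - 1 : ℕ) ≤ r j * 1 := by
          exact mul_le_mul_of_nonneg_left h1 (hr j).le
      _ < 1 := by rw [mul_one]; exact hrlt1 j
  -- sum of lengths is at most 1
  have hLsum : (∑ j, L j) ≤ 1 := by
    have hvol : ∀ j, MeasureTheory.volume (Ioo (c j) (c j + L j)) = ENNReal.ofReal (L j) := by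
      intro j; rw [Real.volume_Ioo, add_sub_cancel_left]
    have h1 : ∑ j, ENNReal.ofReal (L j) ≤ 1 := by
      calc ∑ j, ENNReal.ofReal (L j)
          = ∑' j, MeasureTheory.volume (Ioo (c j) (c j + L j)) := by
            rw [tsum_fintype]; exact Finset.sum_congr rfl fun j _ => (hvol j).symm
        _ = MeasureTheory.volume (⋃ j, Ioo (c j) (c j + L j)) :=
            (MeasureTheory.measure_iUnion hdisj (fun j => measurableSet_Ioo)).symm
        _ ≤ MeasureTheory.volume (Ioo (0:ℝ) 1) :=
            MeasureTheory.measure_mono (iUnion_subset hsub)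
        _ = 1 := by rw [Real.volume_Ioo]; norm_num
    rw [← ENNReal.ofReal_sum_of_nonneg (fun j _ => (hL j).le)] at h1
    exact ENNReal.ofReal_le_one.1 h1
  -- the function g
  set g : ℝ → ℝ := fun t => ∑ j, (r j * L j ^ (2 * ℓ - 1 : ℕ)) ^ t with hgdef
  have hganti : StrictAnti g := by
    intro s t hst
    exact Finset.sum_lt_sum_of_nonempty ⟨⟨0, hnpos⟩, Finset.mem_univ _⟩
      (fun j _ => Real.rpow_lt_rpow_of_exponent_gt (h𝔠pos j) (h𝔠lt1 j) hst)
  have hgcont : Continuous g := continuous_finset_sum _ fun j _ =>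
    continuous_iff_continuousAt.2 fun t => Real.continuousAt_const_rpow (ne_of_gt (h𝔠pos j))
  have hg0 : g 0 = n := by
    simp [hgdef, Real.rpow_zero]
  have hgtend : Filter.Tendsto g Filter.atTop (nhds 0) := by
    have h := tendsto_finset_sum (Finset.univ : Finset (Fin n))
      (fun j _ => tendsto_rpow_atTop_of_base_lt_one _ (by linarith [h𝔠pos j]) (h𝔠lt1 j))
    simpa using h
  -- find T with g T < 1
  obtain ⟨T, hgT, hTpos⟩ : ∃ T, g T < 1 ∧ 0 < T := by
    have h1 : ∀ᶠ T in Filter.atTop, g T < 1 := hgtend.eventually_lt_const one_pos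
    exact (h1.and (Filter.eventually_gt_atTop 0)).exists
  -- IVT
  obtain ⟨t, htmem, hgt⟩ : ∃ t ∈ Icc (0:ℝ) T, g t = 1 := by
    have h1 : (1:ℝ) ∈ Icc (g T) (g 0) := by
      constructor
      · exact hgT.le
      · rw [hg0]; exact_mod_cast Nat.one_le_iff_ne_zero.2 (by omega)
    obtain ⟨t, ht, hgt⟩ := intermediate_value_Icc' hTpos.le hgcont.continuousOn h1
    exact ⟨t, ht, hgt⟩
  have htpos : 0 < t := by
    rcases htmem.1.lt_or_eq with h | h
    · exact h
    · exfalso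
      rw [← h, hg0] at hgt
      have : (2:ℝ) ≤ (n:ℝ) := by exact_mod_cast hn
      linarith
  -- the exponent a = 1/(2ℓ)
  have h2ℓpos : (0:ℝ) < 2 * (ℓ:ℝ) := by
    have : (1:ℝ) ≤ (ℓ:ℝ) := by exact_mod_cast hℓ
    linarith
  set a : ℝ := 1 / (2 * (ℓ:ℝ)) with ha_def
  have ha : 0 < a := by positivity
  have ha1 : a < 1 := by
    rw [ha_def, div_lt_one h2ℓpos]
    have : (1:ℝ) ≤ (ℓ:ℝ) := by exact_mod_cast hℓ
    linarith
  have hkcast : ((2 * ℓ - 1 : ℕ) : ℝ) = 2 * (ℓ:ℝ) - 1 := by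
    have : 1 ≤ 2 * ℓ := by omega
    push_cast [Nat.cast_sub this]
    ring
  have hterm : ∀ j, (r j * L j ^ (2 * ℓ - 1 : ℕ)) ^ a = r j ^ a * L j ^ (1 - a) := by
    intro j
    rw [Real.mul_rpow (hr j).le (pow_nonneg (hL j).le _), ← Real.rpow_natCast (L j) (2 * ℓ - 1),
      ← Real.rpow_mul (hL j).le]
    congr 1
    rw [hkcast, ha_def]
    field_simp
  have hle : ∀ j, (r j * L j ^ (2 * ℓ - 1 : ℕ)) ^ a ≤ a * r j + (1 - a) * L j := by
    intro j
    rw [hterm j]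
    rcases eq_or_ne (r j) (L j) with h | h
    · rw [h, ← Real.rpow_add (hL j)]
      have h1 : a + (1 - a) = 1 := by ring
      rw [h1, Real.rpow_one]
      have : a * L j + (1 - a) * L j = L j := by ring
      linarith
    · exact (amgm_strict ha ha1 (hr j) (hL j) h).le
  have hsum_ar : ∑ j, (a * r j + (1 - a) * L j) = a + (1 - a) * (∑ j, L j) := by
    rw [Finset.sum_add_distrib, ← Finset.mul_sum, ← Finset.mul_sum, hrsum, mul_one]
  have hkey : g a ≤ 1 := by
    calc g a ≤ ∑ j, (a * r j + (1 - a) * L j) := Finset.sum_le_sum (fun j _ => hle j)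
      _ = a + (1 - a) * (∑ j, L j) := hsum_ar
      _ ≤ a + (1 - a) * 1 := by nlinarith [hLsum]
      _ = 1 := by ring
  -- a useful equivalence : p = 2ℓ ↔ 1/p = a
  have hinv : ∀ p : ℝ, 0 < p → (1 / p = a ↔ p = 2 * (ℓ:ℝ)) := by
    intro p hp
    rw [ha_def]
    constructor
    · intro h
      rw [← one_div_one_div p, h, one_div_one_div]
    · intro h; rw [h]
  refine ⟨⟨1 / t, ⟨by positivity, ?_⟩, ?_⟩, ?_⟩
  · show g (1 / (1 / t)) = 1
    rw [one_div_one_div]; exact hgt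
  · rintro q ⟨hq, hq1⟩
    have h1 : g (1 / q) = g (1 / (1 / t)) := by
      rw [one_div_one_div]
      show g (1 / q) = g t
      rw [hgt]; exact hq1
    have h2 : 1 / q = 1 / (1 / t) := hganti.injective h1
    rw [← one_div_one_div q, h2, one_div_one_div]
  · intro p hp hp1
    have hgp : g (1 / p) = 1 := hp1
    constructor
    · by_contra hlt
      push_neg at hlt
      have h1p : a < 1 / p := by
        rw [ha_def]
        exact one_div_lt_one_div_of_lt hp hlt
      have := hganti h1p
      rw [hgp] at this
      linarith
    · constructor
      · -- p = 2ℓ → Lebesgue case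
        intro hp2ℓ
        have hga1 : g a = 1 := by
          rw [← hgp]
          congr 1
          rw [hp2ℓ, ha_def]
        have h1 : (1:ℝ) ≤ a + (1 - a) * (∑ j, L j) := by
          calc (1:ℝ) = g a := hga1.symm
            _ ≤ ∑ j, (a * r j + (1 - a) * L j) := Finset.sum_le_sum (fun j _ => hle j)
            _ = a + (1 - a) * (∑ j, L j) := hsum_ar
        have hLsum1 : (∑ j, L j) = 1 := by nlinarith [hLsum]
        have hEq : ∀ j, (r j * L j ^ (2 * ℓ - 1 : ℕ)) ^ a = a * r j + (1 - a) * L j := by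
          have hzero : ∑ j, ((a * r j + (1 - a) * L j) - (r j * L j ^ (2 * ℓ - 1 : ℕ)) ^ a) = 0 := by
            rw [Finset.sum_sub_distrib, hsum_ar, hLsum1]
            have : g a = ∑ j, (r j * L j ^ (2 * ℓ - 1 : ℕ)) ^ a := rfl
            rw [← this, hga1]
            ring
          intro j
          have h2 := (Finset.sum_eq_zero_iff_of_nonneg
            (fun j _ => sub_nonneg.2 (hle j))).1 hzero j (Finset.mem_univ j)
          linarith
        refine ⟨?_, hLsum1⟩
        intro j
        by_contra h
        have hstrict := amgm_strict ha ha1 (hr j) (hL j) h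
        have h3 := hEq j
        rw [hterm j] at h3
        linarith
      · -- Lebesgue case → p = 2ℓ
        rintro ⟨hrL, hLsum1⟩
        have hga1 : g a = 1 := by
          have hterm2 : ∀ j, (r j * L j ^ (2 * ℓ - 1 : ℕ)) ^ a = L j := by
            intro j
            have h1 : r j * L j ^ (2 * ℓ - 1 : ℕ) = L j ^ (2 * ℓ : ℕ) := by
              rw [hrL j, ← pow_succ']
              congr 1
              omega
            rw [h1, ← Real.rpow_natCast (L j) (2 * ℓ), ← Real.rpow_mul (hL j).le]
            have h2 : ((2 * ℓ : ℕ) : ℝ) * a = 1 := by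
              rw [ha_def]
              push_cast
              field_simp
            rw [h2, Real.rpow_one]
          show (∑ j, (r j * L j ^ (2 * ℓ - 1 : ℕ)) ^ a) = 1
          rw [Finset.sum_congr rfl (fun j _ => hterm2 j), hLsum1]
        have h1 : g (1 / p) = g a := by rw [hgp, hga1]
        have h2 : 1 / p = a := hganti.injective h1
        exact (hinv p hp).1 h2
end
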